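/- Let (L, σ) be a σ-extension of a σ-field (K, σ), let a ∈ L be σ-algebraic over K, and let V be the K-vector subspace of L spanned by the elements N_i(a), i ≥ 0. Then every b ∈ L that is σ-conjugate to a over V (i.e., b = σ(x)·a·x^{−1} for some nonzero x ∈ V) is σ-algebraic over K. -/

import Mathlib

open Polynomial

variable {K : Type*} [Field K]

/-- `skewN σ i a = σ^{i-1}(a)⋯σ(a)·a`, with `skewN σ 0 a = 1`. -/
def skewN (σ : K →+* K) : ℕ → K → K
  | 0, _ => 1
  | i + 1, a => σ (skewN σ i a) * a

/-- Right evaluation of a skew polynomial `P = Σ aᵢ Tⁱ` at `a`: `P(a) = Σ aᵢ Nᵢ(a)`. -/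
noncomputable def skewEval (σ : K →+* K) (P : Polynomial K) (a : K) : K :=
  ∑ i ∈ P.support, P.coeff i * skewN σ i a

/-- Multiplication in the skew polynomial ring `K[T;σ]` (with `T·a = σ(a)·T`),
using `Polynomial K` as the carrier of coefficient sequences. -/
noncomputable def skewMul (σ : K →+* K) (P Q : Polynomial K) : Polynomial K :=
  ∑ i ∈ P.support, ∑ j ∈ Q.support,
    Polynomial.C (P.coeff i * (⇑σ)^[i] (Q.coeff j)) * Polynomial.X ^ (i + j)

/-- In a σ-extension `(L, σL)` of the σ-subfield `K`, the element `a` is σ-algebraic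
over `K`: it is a right root of some nonzero skew polynomial with coefficients in `K`. -/
def IsSkewAlgebraic {L : Type*} [Field L] (σL : L →+* L) (K : Subfield L) (a : L) : Prop :=
  ∃ P : Polynomial L, P ≠ 0 ∧ (∀ i, P.coeff i ∈ K) ∧ skewEval σL P a = 0

/-!
Since `a` is a root of a skew polynomial of degree `n`, the identity
`N_{i+j}(a) = σ^i(N_j(a)) N_i(a)` shows that every `N_m(a)` lies in the `K`-span of
`N_0(a), …, N_{n-1}(a)`, so `V` is finite-dimensional. The same identity shows that
`y ↦ σ^i(y) N_i(a)` maps `V` into itself, and for `b = σ(x) a x⁻¹` one has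
`N_i(b) = σ^i(x) N_i(a) x⁻¹`. Hence all `N_i(b)` lie in the finite-dimensional space `V x⁻¹`,
so they are linearly dependent over `K`, and a dependence relation is a skew polynomial
vanishing at `b`.
-/

open Submodule

section SkewN

variable (σ : K →+* K)

lemma skewN_add (i j : ℕ) (a : K) :
    skewN σ (i + j) a = σ^[i] (skewN σ j a) * skewN σ i a := by
  induction i with
  | zero => simp [skewN]
  | succ i ih =>
    rw [add_right_comm, skewN, ih, map_mul, mul_assoc, ← skewN, Function.iterate_succ_apply']

lemma skewN_conj {x : K} (hx : x ≠ 0) (a : K) (i : ℕ) :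
    skewN σ i (σ x * a * x⁻¹) = σ^[i] x * skewN σ i a * x⁻¹ := by
  induction i with
  | zero => simp [skewN, hx]
  | succ i ih =>
    have hσx : σ x ≠ 0 := (map_ne_zero σ).mpr hx
    rw [skewN, ih, skewN, Function.iterate_succ_apply', map_mul, map_mul, map_inv₀]
    field_simp

lemma skewEval_eq_sum_of_support_subset (P : K[X]) (a : K) {s : Finset ℕ}
    (h : P.support ⊆ s) : skewEval σ P a = ∑ i ∈ s, P.coeff i * skewN σ i a :=
  Finset.sum_subset h fun i _ hi => by rw [notMem_support_iff.mp hi, zero_mul]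

end SkewN

section SigmaExtension

variable {L : Type*} [Field L] (σL : L →+* L) (K : Subfield L)

lemma isSkewAlgebraic_of_not_linearIndependent {b : L}
    (h : ¬LinearIndependent K fun i => skewN σL i b) : IsSkewAlgebraic σL K b := by
  classical
  obtain ⟨s, g, hsum, i, his, hgi⟩ := not_linearIndependent_iff.mp h
  set P : L[X] := ∑ j ∈ s, monomial j (g j : L)
  have hcoeff : ∀ k, P.coeff k = if k ∈ s then (g k : L) else 0 := fun k => by
    simp [P, finsetSum_coeff, coeff_monomial]
  refine ⟨P, fun hP => hgi ?_, fun k => ?_, ?_⟩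
  · simpa [hcoeff, his] using congrArg (coeff · i) hP
  · rw [hcoeff]; split_ifs
    exacts [(g k).2, K.zero_mem]
  · have hsupp : P.support ⊆ s := fun k hk => by
      by_contra hks
      exact mem_support_iff.mp hk (by rw [hcoeff, if_neg hks])
    rw [skewEval_eq_sum_of_support_subset σL P b hsupp]
    simpa [hcoeff, Finset.sum_ite_mem, Subfield.smul_def] using hsum

lemma isSkewAlgebraic_of_finiteDimensional_span {b : L}
    (h : FiniteDimensional K (span K (Set.range fun i => skewN σL i b))) :
    IsSkewAlgebraic σL K b := by
  refine isSkewAlgebraic_of_not_linearIndependent σL K fun hli => ?_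
  let v : ℕ → span K (Set.range fun i => skewN σL i b) := fun i => ⟨_, subset_span ⟨i, rfl⟩⟩
  exact Module.Finite.not_linearIndependent_of_infinite v (.of_comp (Submodule.subtype _) hli)

variable {σL K}

lemma skewN_natDegree_mem_span {a : L} {P : L[X]} (hP : P ≠ 0) (hPK : ∀ i, P.coeff i ∈ K)
    (hPa : skewEval σL P a = 0) :
    skewN σL P.natDegree a ∈ span K ((skewN σL · a) '' Set.Iio P.natDegree) := by
  set n := P.natDegree
  have hlead : (⟨P.coeff n, hPK n⟩ : K) ≠ 0 :=
    fun h => leadingCoeff_ne_zero.mpr hP (congrArg Subtype.val h)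
  rw [← smul_mem_iff _ hlead]
  rw [skewEval_eq_sum_of_support_subset σL P a supp_subset_range_natDegree_succ,
    Finset.sum_range_succ, add_eq_zero_iff_eq_neg'] at hPa
  change P.coeff n * skewN σL n a ∈ _
  rw [hPa]
  exact neg_mem <| sum_mem fun i hi =>
    smul_mem _ (⟨P.coeff i, hPK i⟩ : K) (subset_span ⟨i, Finset.mem_range.mp hi, rfl⟩)

variable (hK : ∀ x ∈ K, σL x ∈ K)
include hK

lemma iterate_mem_of_mem (t : ℕ) {y : L} (hy : y ∈ K) : σL^[t] y ∈ K := by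
  induction t with
  | zero => exact hy
  | succ t ih => rw [Function.iterate_succ_apply']; exact hK _ ih

lemma iterate_mul_skewN_mem_span (a : L) (t : ℕ) {S : Set ℕ} {y : L}
    (hy : y ∈ span K ((skewN σL · a) '' S)) :
    σL^[t] y * skewN σL t a ∈ span K ((fun j => skewN σL (t + j) a) '' S) := by
  induction hy using span_induction with
  | mem _ hz =>
    obtain ⟨j, hj, rfl⟩ := hz
    exact subset_span ⟨j, hj, skewN_add σL t j a⟩
  | zero => simp
  | add y z _ _ hy hz => rw [iterate_map_add, add_mul]; exact add_mem hy hz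
  | smul k y _ hy =>
    rw [show k • y = (k : L) * y from rfl, iterate_map_mul, mul_assoc]
    exact smul_mem _ (⟨_, iterate_mem_of_mem hK t k.2⟩ : K) hy

lemma iterate_mul_skewN_mem_span_range (a : L) (t : ℕ) {y : L}
    (hy : y ∈ span K (Set.range fun i => skewN σL i a)) :
    σL^[t] y * skewN σL t a ∈ span K (Set.range fun i => skewN σL i a) := by
  have hy' : y ∈ span K ((skewN σL · a) '' Set.univ) := by rwa [Set.image_univ]
  refine span_mono ?_ (iterate_mul_skewN_mem_span hK a t hy')
  rintro _ ⟨j, -, rfl⟩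
  exact ⟨t + j, rfl⟩

lemma skewN_mem_span_Iio {a : L} {n : ℕ}
    (hn : skewN σL n a ∈ span K ((skewN σL · a) '' Set.Iio n)) (m : ℕ) :
    skewN σL m a ∈ span K ((skewN σL · a) '' Set.Iio n) := by
  induction m with
  | zero =>
    rcases Nat.eq_zero_or_pos n with rfl | hn0
    exacts [hn, subset_span ⟨0, hn0, rfl⟩]
  | succ m ih =>
    have hshift := iterate_mul_skewN_mem_span hK a 1 ih
    rw [add_comm, skewN_add, ← Function.iterate_one σL]
    refine span_le.mpr ?_ hshift
    rintro _ ⟨j, hj, rfl⟩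
    rcases (show 1 + j ≤ n by have := Set.mem_Iio.mp hj; omega).lt_or_eq with hlt | heq
    · exact subset_span ⟨1 + j, hlt, rfl⟩
    · simp only [heq]; exact hn

lemma finiteDimensional_span_range_skewN {a : L} (ha : IsSkewAlgebraic σL K a) :
    FiniteDimensional K (span K (Set.range fun i => skewN σL i a)) := by
  obtain ⟨P, hP, hPK, hPa⟩ := ha
  have hle : span K (Set.range fun i => skewN σL i a) ≤
      span K ((skewN σL · a) '' Set.Iio P.natDegree) :=
    span_le.mpr <| Set.range_subset_iff.mpr <|
      skewN_mem_span_Iio hK (skewN_natDegree_mem_span hP hPK hPa)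
  have : FiniteDimensional K (span K ((skewN σL · a) '' Set.Iio P.natDegree)) :=
    FiniteDimensional.span_of_finite K ((Set.finite_Iio _).image _)
  exact Submodule.finiteDimensional_of_le hle

end SigmaExtension

/-- If `a` is σ-algebraic over `K` and `V` is the `K`-span of the `Nᵢ(a)`, then every
σ-conjugate `σ(x)·a·x⁻¹` of `a` over `V` is σ-algebraic over `K`. -/
theorem stmt_8 {L : Type*} [Field L] (σL : L →+* L) (K : Subfield L)
    (hK : ∀ x ∈ K, σL x ∈ K) (a : L) (ha : IsSkewAlgebraic σL K a)
    (b x : L) (hx : x ∈ Submodule.span K (Set.range fun i : ℕ => skewN σL i a))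
    (hx0 : x ≠ 0) (hb : b = σL x * a * x⁻¹) :
    IsSkewAlgebraic σL K b := by
  subst hb
  have hV := finiteDimensional_span_range_skewN hK ha
  have hle : span K (Set.range fun i => skewN σL i (σL x * a * x⁻¹)) ≤
      (span K (Set.range fun i => skewN σL i a)).map (LinearMap.mulRight K x⁻¹) :=
    span_le.mpr <| Set.range_subset_iff.mpr fun i =>
      ⟨_, iterate_mul_skewN_mem_span_range hK a i hx, (skewN_conj σL hx0 a i).symm⟩
  exact isSkewAlgebraic_of_finiteDimensional_span σL K (Submodule.finiteDimensional_of_le hle)
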